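/- Let a and b be points with a_x ≤ b_x and a_y ≥ b_y in a rotated coordinate system at angle θ, and let e be a segment every point p of which satisfies p_x < a_x or p_y < b_y in all frames C_{θ'} for θ' ∈ (θ, θ1]. Then for any point u with u_x ≥ b_x and u_y ≥ a_y and any p ∈ e, the axis-aligned rectangle with diagonal up (in frame C_{θ'}) contains a or b in its interior. -/

import Mathlib

open Set

theorem interior_Icc_prod {α β : Type*} [TopologicalSpace α] [LinearOrder α] [OrderTopology α]
    [DenselyOrdered α] [NoMinOrder α] [NoMaxOrder α] [TopologicalSpace β] [LinearOrder β]
    [OrderTopology β] [DenselyOrdered β] [NoMinOrder β] [NoMaxOrder β] (p u : α × β) :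
    interior (Icc p u) = Ioo p.1 u.1 ×ˢ Ioo p.2 u.2 := by
  rw [Icc_prod_eq, interior_prod_eq, interior_Icc, interior_Icc]

/-- Let `a, b` be points with `a_x ≤ b_x`, `b_y ≤ a_y`, let `u` dominate them
(`b_x < u_x`, `a_y < u_y`) and let `p` satisfy `p_x < b_x`, `p_y < a_y` and
(`p_x < a_x` or `p_y < b_y`). Then the axis-aligned rectangle with diagonal `p u`
contains `a` or `b` in its interior. -/
theorem rect_diagonal_contains_tip (a b u p : ℝ × ℝ)
    (h1 : a.1 ≤ b.1) (h2 : b.2 ≤ a.2)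
    (h3 : b.1 < u.1) (h4 : a.2 < u.2)
    (h5 : p.1 < b.1) (h6 : p.2 < a.2)
    (h7 : p.1 < a.1 ∨ p.2 < b.2) :
    a ∈ interior (Set.Icc p u) ∨ b ∈ interior (Set.Icc p u) := by
  rw [interior_Icc_prod]
  rcases h7 with hpa | hpb
  · exact Or.inl ⟨⟨hpa, h1.trans_lt h3⟩, h6, h4⟩
  · exact Or.inr ⟨⟨h5, h3⟩, hpb, h2.trans_lt h4⟩
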